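/- Let K_R ≥ 0, γ > 0, α ∈ (0,1), t ∈ (0,1) and β = α^t, and define Λ(Ω) = (1/(K_R+1))·(1−α²)/(1−2α·cos Ω + α²) and Λ_dh(Ω) = (1/(K_R+1))·(α(β⁻¹−β)·e^{iΩ} + β − α²β⁻¹)/(1−2α·cos Ω + α²). Then (1/(2π))·∫_{−π}^{π} [Λ(Ω) − |Λ_dh(Ω)|²/(Λ(Ω) + 1/γ)] dΩ = 1/√(γ² + 2γ·((1+α²)/(1−α²))·(K_R+1) + (K_R+1)²) + (1/(2π))·∫_{−π}^{π} (Λ(Ω)² − |Λ_dh(Ω)|²)/(Λ(Ω) + 1/γ) dΩ. -/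

import Mathlib

/-!
Pointwise, `Λ - |Λ_dh|²/(Λ + 1/γ) = (Λ - Λ²/(Λ + 1/γ)) + (Λ² - |Λ_dh|²)/(Λ + 1/γ)`, so it suffices
to evaluate the pilot term `Λ - Λ²/(Λ + 1/γ) = Λ/(1 + γΛ)`. Writing `Λ = P/(1 - 2α cos Ω + α²)` with
`P = (1 - α²)/(K_R + 1)`, this is `P/(a - 2α cos Ω)` with `a = 1 + α² + γP`, and
`∫_{-π}^{π} (a - b cos Ω)⁻¹ dΩ = 2π/√(a² - b²)` follows from the Poisson kernel identity
`∫_{-π}^{π} (1 - q²)/(1 - 2q cos x + q²) dx = 2π` (`|q| < 1`), whose integrand has the smooth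
antiderivative `x + 2 arctan (q sin x / (1 - q cos x))`. Finally `a² - 4α² = P² E`, where `E` is
the expression under the square root.
-/

/-- The power spectrum `Λ(Ω) = (1/(K_R+1))·(1-α²)/(1-2α cos Ω + α²)`. -/
noncomputable def powSpec (K_R α Ω : ℝ) : ℝ :=
  (1 / (K_R + 1)) * (1 - α ^ 2) / (1 - 2 * α * Real.cos Ω + α ^ 2)

/-- The cross power spectrum
`Λ_dh(Ω) = (1/(K_R+1))·(α(β⁻¹-β)e^{iΩ} + β - α²β⁻¹)/(1-2α cos Ω + α²)` with `β = α^t`. -/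
noncomputable def crossPowSpec (K_R α t Ω : ℝ) : ℂ :=
  (((1 / (K_R + 1)) : ℝ) : ℂ) *
    ((((α * ((α ^ t)⁻¹ - α ^ t) : ℝ) : ℂ) * Complex.exp (Complex.I * (Ω : ℂ))
        + ((α ^ t : ℝ) : ℂ) - ((α ^ 2 * (α ^ t)⁻¹ : ℝ) : ℂ))
      / (((1 - 2 * α * Real.cos Ω + α ^ 2 : ℝ)) : ℂ))

open Real

lemma one_sub_mul_cos_pos {q : ℝ} (hq : |q| < 1) (x : ℝ) : 0 < 1 - q * cos x := by
  have : q * cos x < 1 := calc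
    q * cos x ≤ |q| * |cos x| := by rw [← abs_mul]; exact le_abs_self _
    _ ≤ |q| := mul_le_of_le_one_right (abs_nonneg q) (abs_cos_le_one x)
    _ < 1 := hq
  linarith

lemma one_sub_two_mul_cos_add_sq_pos {q : ℝ} (hq : |q| < 1) (x : ℝ) :
    0 < 1 - 2 * q * cos x + q ^ 2 := by
  have h := one_sub_mul_cos_pos hq x
  nlinarith [sq_nonneg (q * sin x), sin_sq_add_cos_sq x]

lemma hasDerivAt_add_two_mul_arctan {q : ℝ} (hq : |q| < 1) (x : ℝ) :
    HasDerivAt (fun x => x + 2 * arctan (q * sin x / (1 - q * cos x)))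
      ((1 - q ^ 2) / (1 - 2 * q * cos x + q ^ 2)) x := by
  have hc := (one_sub_mul_cos_pos hq x).ne'
  have hD := (one_sub_two_mul_cos_add_sq_pos hq x).ne'
  have hquot : HasDerivAt (fun x => q * sin x / (1 - q * cos x))
      ((q * cos x * (1 - q * cos x) - q * sin x * (q * sin x)) / (1 - q * cos x) ^ 2) x :=
    ((hasDerivAt_sin x).const_mul q).div
      (by simpa using ((hasDerivAt_cos x).const_mul q).const_sub 1) hc
  have h : HasDerivAt (fun x => x + 2 * arctan (q * sin x / (1 - q * cos x)))
      (1 + 2 * (1 / (1 + (q * sin x / (1 - q * cos x)) ^ 2) *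
        ((q * cos x * (1 - q * cos x) - q * sin x * (q * sin x)) / (1 - q * cos x) ^ 2))) x :=
    (hasDerivAt_id' x).add (hquot.arctan.const_mul 2)
  convert h using 1
  have hsin : sin x ^ 2 = 1 - cos x ^ 2 := by rw [← cos_sq_add_sin_sq x]; ring
  have hsum : 1 + (q * sin x / (1 - q * cos x)) ^ 2
      = (1 - 2 * q * cos x + q ^ 2) / (1 - q * cos x) ^ 2 := by
    field_simp
    linear_combination q ^ 2 * hsin
  rw [hsum]
  generalize hDdef : 1 - 2 * q * cos x + q ^ 2 = D at hD ⊢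
  field_simp
  linear_combination hDdef + 2 * q ^ 2 * hsin

lemma integral_poisson_kernel {q : ℝ} (hq : |q| < 1) :
    ∫ x in (-π)..π, (1 - q ^ 2) / (1 - 2 * q * cos x + q ^ 2) = 2 * π := by
  have hcont : Continuous fun x => (1 - q ^ 2) / (1 - 2 * q * cos x + q ^ 2) :=
    continuous_const.div (by fun_prop) fun x => (one_sub_two_mul_cos_add_sq_pos hq x).ne'
  rw [intervalIntegral.integral_eq_sub_of_hasDerivAt
    (fun x _ => hasDerivAt_add_two_mul_arctan hq x) (hcont.intervalIntegrable _ _)]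
  simp only [sin_pi, cos_pi, sin_neg, cos_neg, mul_zero, zero_div, neg_zero, arctan_zero]
  ring

lemma integral_inv_sub_mul_cos {a b : ℝ} (hb : 0 < b) (hba : b < a) :
    ∫ x in (-π)..π, (a - b * cos x)⁻¹ = 2 * π / √(a ^ 2 - b ^ 2) := by
  have hs2 : 0 < a ^ 2 - b ^ 2 := by nlinarith
  set s := √(a ^ 2 - b ^ 2)
  have hs : 0 < s := sqrt_pos.mpr hs2
  have hss : s ^ 2 = a ^ 2 - b ^ 2 := sq_sqrt hs2.le
  have hsa : s < a := by nlinarith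
  -- `q ∈ (-1, 1)` solves `b q² - 2 a q + b = 0`, which turns `(a - b cos x)⁻¹` into a multiple
  -- of the Poisson kernel `(1 - q²) / (1 - 2 q cos x + q²)`
  set q := (a - s) / b
  have hqb : q * b = a - s := div_mul_cancel₀ _ hb.ne'
  clear_value q
  have hq : |q| < 1 := by
    rw [abs_lt]
    constructor <;> nlinarith
  have hquad : b * q ^ 2 + b = 2 * a * q := by
    refine mul_left_cancel₀ hb.ne' ?_
    linear_combination (q * b - a - s) * hqb + hss
  have hpt : ∀ x, (a - b * cos x)⁻¹ = s⁻¹ * ((1 - q ^ 2) / (1 - 2 * q * cos x + q ^ 2)) := by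
    intro x
    have hD := (one_sub_two_mul_cos_add_sq_pos hq x).ne'
    have hab : a - b * cos x ≠ 0 := by nlinarith [cos_le_one x]
    have key : (1 - q ^ 2) * (a - b * cos x) = s * (1 - 2 * q * cos x + q ^ 2) := by
      linear_combination (q - cos x) * hquad - (1 - 2 * q * cos x + q ^ 2) * hqb
    rw [← mul_div_assoc, eq_div_iff hD]
    field_simp
    linear_combination -key
  simp_rw [hpt]
  rw [intervalIntegral.integral_const_mul, integral_poisson_kernel hq]
  ring

lemma sub_sq_div_add_inv {x γ : ℝ} (hγ : γ ≠ 0) (hx : 1 + γ * x ≠ 0) :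
    x - x ^ 2 / (x + 1 / γ) = x / (1 + γ * x) := by
  rw [show x + 1 / γ = (1 + γ * x) / γ by field_simp; ring, div_div_eq_mul_div,
    eq_div_iff hx, sub_mul, div_mul_cancel₀ _ hx]
  ring

section Spectra

variable {K_R α : ℝ}

lemma powSpec_pos (hK : 0 < K_R + 1) (hα : |α| < 1) (Ω : ℝ) : 0 < powSpec K_R α Ω := by
  have : 0 < 1 - α ^ 2 := by nlinarith [abs_nonneg α, sq_abs α]
  unfold powSpec
  have := one_sub_two_mul_cos_add_sq_pos hα Ω
  positivity

lemma continuous_powSpec (hα : |α| < 1) : Continuous (powSpec K_R α) :=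
  continuous_const.div (by fun_prop) fun Ω => (one_sub_two_mul_cos_add_sq_pos hα Ω).ne'

lemma continuous_crossPowSpec {t : ℝ} (hα : |α| < 1) : Continuous (crossPowSpec K_R α t) :=
  continuous_const.mul <| Continuous.div (by fun_prop) (by fun_prop) fun Ω => by
    exact_mod_cast (one_sub_two_mul_cos_add_sq_pos hα Ω).ne'

/-- The pilot-location MSE `σ_p²` in closed form (Theorem 1). -/
lemma integral_powSpec_sub_sq_div {γ : ℝ} (hK : 0 < K_R + 1) (hγ : 0 < γ)
    (hα : α ∈ Set.Ioo (0 : ℝ) 1) :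
    (1 / (2 * π)) * ∫ Ω in (-π)..π,
        (powSpec K_R α Ω - powSpec K_R α Ω ^ 2 / (powSpec K_R α Ω + 1 / γ))
      = 1 / √(γ ^ 2 + 2 * γ * ((1 + α ^ 2) / (1 - α ^ 2)) * (K_R + 1) + (K_R + 1) ^ 2) := by
  obtain ⟨hα0, hα1⟩ := hα
  have hα' : |α| < 1 := by rwa [abs_of_pos hα0]
  have h1α : 0 < 1 - α ^ 2 := by nlinarith
  set P := 1 / (K_R + 1) * (1 - α ^ 2)
  have hP : 0 < P := by positivity
  have hpt : ∀ Ω, powSpec K_R α Ω - powSpec K_R α Ω ^ 2 / (powSpec K_R α Ω + 1 / γ)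
      = P * ((1 + α ^ 2 + γ * P) - 2 * α * cos Ω)⁻¹ := by
    intro Ω
    have hD := (one_sub_two_mul_cos_add_sq_pos hα' Ω).ne'
    rw [sub_sq_div_add_inv hγ.ne' (by have := powSpec_pos hK hα' Ω; positivity),
      show 1 + α ^ 2 + γ * P - 2 * α * cos Ω = 1 - 2 * α * cos Ω + α ^ 2 + γ * P by ring]
    change P / _ / (1 + γ * (P / _)) = _
    generalize 1 - 2 * α * cos Ω + α ^ 2 = D at hD ⊢
    field_simp
  simp_rw [hpt]
  rw [intervalIntegral.integral_const_mul,
    integral_inv_sub_mul_cos (by positivity) (by nlinarith [mul_pos hγ hP])]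
  have hsq : (1 + α ^ 2 + γ * P) ^ 2 - (2 * α) ^ 2
      = P ^ 2 * (γ ^ 2 + 2 * γ * ((1 + α ^ 2) / (1 - α ^ 2)) * (K_R + 1) + (K_R + 1) ^ 2) := by
    simp only [P]
    field_simp
    ring
  rw [hsq, sqrt_mul (sq_nonneg P), sqrt_sq hP.le]
  field_simp

end Spectra

theorem mse_data_locations_split_general (K_R γ α t : ℝ) (hK : 0 ≤ K_R) (hγ : 0 < γ)
    (hα : α ∈ Set.Ioo (0 : ℝ) 1) :
    (1 / (2 * Real.pi)) * ∫ Ω in (-Real.pi)..Real.pi,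
        (powSpec K_R α Ω
          - ‖crossPowSpec K_R α t Ω‖ ^ 2 / (powSpec K_R α Ω + 1 / γ))
      = 1 / Real.sqrt (γ ^ 2 + 2 * γ * ((1 + α ^ 2) / (1 - α ^ 2)) * (K_R + 1)
            + (K_R + 1) ^ 2)
        + (1 / (2 * Real.pi)) * ∫ Ω in (-Real.pi)..Real.pi,
            ((powSpec K_R α Ω) ^ 2 - ‖crossPowSpec K_R α t Ω‖ ^ 2)
              / (powSpec K_R α Ω + 1 / γ) := by
  have hK1 : 0 < K_R + 1 := by linarith
  have hα' : |α| < 1 := abs_lt.mpr ⟨by linarith [hα.1], hα.2⟩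
  have hΛ : Continuous (powSpec K_R α) := continuous_powSpec hα'
  have hΛdh : Continuous (crossPowSpec K_R α t) := continuous_crossPowSpec hα'
  have hden : ∀ Ω, powSpec K_R α Ω + 1 / γ ≠ 0 := fun Ω => by
    have := powSpec_pos hK1 hα' Ω
    positivity
  rw [← integral_powSpec_sub_sq_div hK1 hγ hα, ← mul_add,
    ← intervalIntegral.integral_add (Continuous.intervalIntegrable ?_ _ _)
      (Continuous.intervalIntegrable ?_ _ _)]
  · congr 2 with Ω
    ring
  all_goals fun_prop (disch := exact hden)

/-- Equation (38) in Appendix B combined with the closed form of Theorem 1: the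
data-location MSE integral splits into the pilot-location MSE `σ_p²` plus a correction term:
`(1/(2π)) ∫ [Λ - |Λ_dh|²/(Λ + 1/γ)] dΩ
  = 1/√(γ² + 2γ((1+α²)/(1-α²))(K_R+1) + (K_R+1)²)
    + (1/(2π)) ∫ (Λ² - |Λ_dh|²)/(Λ + 1/γ) dΩ`. -/
theorem mse_data_locations_split (K_R γ α t : ℝ) (hK : 0 ≤ K_R) (hγ : 0 < γ)
    (hα : α ∈ Set.Ioo (0 : ℝ) 1) (ht : t ∈ Set.Ioo (0 : ℝ) 1) :
    (1 / (2 * Real.pi)) * ∫ Ω in (-Real.pi)..Real.pi,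
        (powSpec K_R α Ω
          - ‖crossPowSpec K_R α t Ω‖ ^ 2 / (powSpec K_R α Ω + 1 / γ))
      = 1 / Real.sqrt (γ ^ 2 + 2 * γ * ((1 + α ^ 2) / (1 - α ^ 2)) * (K_R + 1)
            + (K_R + 1) ^ 2)
        + (1 / (2 * Real.pi)) * ∫ Ω in (-Real.pi)..Real.pi,
            ((powSpec K_R α Ω) ^ 2 - ‖crossPowSpec K_R α t Ω‖ ^ 2)
              / (powSpec K_R α Ω + 1 / γ) :=
  mse_data_locations_split_general K_R γ α t hK hγ hα
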